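/- arXiv:1601.02697 — 2 statements merged into one kernel-verified Lean document; each statement's English description precedes it below -/
import Mathlib

section
/- Let G be a graph and G₀ = ({v}, ∅) a single isolated vertex, and Ḡ = G ⊎ G₀ their disjoint union. In any rooted binary tree layout (T̄, φ̄) of Ḡ of minimum tree length, the leaf φ̄(v) is a child of the root of T̄. -/
open SimpleGraph
open scoped Classical

/-- The sum of dilations of the edges of `H` under the embedding `φ` into the tree `T`. -/
noncomputable def treeLength {V W : Type*} [Fintype V] [Fintype W]
    (H : SimpleGraph V) (T : SimpleGraph W) (φ : V → W) : ℕ :=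
  ∑ e ∈ H.edgeFinset, Sym2.lift ⟨fun u v => T.dist (φ u) (φ v),
    fun _ _ => T.dist_comm⟩ e

/-- `(T, r, φ)` is a rooted binary tree layout: `T` is a tree, the root `r` has degree 2,
every other vertex is a leaf or has degree 3 (i.e. every non-root internal node has
exactly 2 children), and `φ` is a bijection onto the leaves of `T`. -/
def IsRootedBinaryLayout {V W : Type*} [Fintype W]
    (T : SimpleGraph W) (r : W) (φ : V → W) : Prop :=
  T.IsTree ∧ T.degree r = 2 ∧ (∀ w : W, w ≠ r → T.degree w = 1 ∨ T.degree w = 3) ∧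
    Set.BijOn φ Set.univ {w : W | T.degree w = 1}

/-- The disjoint union of `G` with a single isolated vertex `none`. -/
def addIsolated {V : Type*} (G : SimpleGraph V) : SimpleGraph (Option V) :=
  SimpleGraph.fromRel (fun a b => ∃ x y, a = some x ∧ b = some y ∧ G.Adj x y)

/-! Suppose the leaf `l = φ none` hangs from `p ≠ r`, whose other neighbours are `q`, towards
`r`, and `c`. Prune `p` by joining `q` to `c` directly, and regraft it above `r`, so that `p`
becomes the new root with children `r` and `l`. This is again a rooted binary layout with the same
leaves, and no distance between leaves other than `l` grows. Both sides of `p` carry leaves of `G`,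
so, `G` being connected, some edge of `G` joins `c`'s side to `q`'s side; its path loses the
vertex `p`. As `l` carries no edge, the tree length strictly drops, contradicting minimality.

Throughout, `T.dist p a = T.dist n a + 1` for a neighbour `n` of `p` says that `a` lies on
`n`'s side of `p`. -/

namespace SimpleGraph

variable {V W : Type*}

theorem Walk.exists_walk_length_le_of_forall_adj {G : SimpleGraph V} {G' : SimpleGraph W}
    {f : V → W} (hf : ∀ x y, G.Adj x y → f x = f y ∨ G'.Adj (f x) (f y)) {a b : V} :
    ∀ P : G.Walk a b, ∃ P' : G'.Walk (f a) (f b), P'.length ≤ P.length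
  | .nil => ⟨.nil, le_rfl⟩
  | .cons h P => by
    obtain ⟨P', hP'⟩ := exists_walk_length_le_of_forall_adj hf P
    rcases hf _ _ h with e | h'
    · exact ⟨P'.copy e.symm rfl, by simp; omega⟩
    · exact ⟨.cons h' P', by simp; omega⟩

theorem Connected.dist_le_of_forall_adj {G : SimpleGraph V} {G' : SimpleGraph W} {f : V → W}
    (hG : G.Connected) (hf : ∀ x y, G.Adj x y → f x = f y ∨ G'.Adj (f x) (f y)) (a b : V) :
    G'.dist (f a) (f b) ≤ G.dist a b := by
  obtain ⟨P, hP⟩ := hG.exists_walk_length_eq_dist a b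
  obtain ⟨P', hP'⟩ := P.exists_walk_length_le_of_forall_adj hf
  exact (dist_le P').trans (hP'.trans hP.le)

theorem Connected.exists_adj_dist_eq_add_one {G : SimpleGraph V} (hG : G.Connected) {u v : V}
    (h : u ≠ v) : ∃ w, G.Adj u w ∧ G.dist u v = G.dist w v + 1 := by
  obtain ⟨P, hP⟩ := hG.exists_walk_length_eq_dist u v
  cases P with
  | nil => exact absurd rfl h
  | @cons _ w _ hadj P =>
    refine ⟨w, hadj, le_antisymm ?_ ?_⟩
    · have := hG.dist_triangle (u := u) (v := w) (w := v)
      rwa [dist_eq_one_iff_adj.2 hadj, add_comm] at this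
    · rw [← hP, Walk.length_cons]
      exact Nat.succ_le_succ (dist_le P)

namespace IsTree

variable {T : SimpleGraph V} (hT : T.IsTree)
include hT

theorem eq_of_adj_of_dist_eq_add_one {p n n' w : V} (hn : T.Adj p n) (hn' : T.Adj p n')
    (h : T.dist p w = T.dist n w + 1) (h' : T.dist p w = T.dist n' w + 1) : n = n' := by
  obtain ⟨P, hP⟩ := hT.connected.exists_walk_length_eq_dist n w
  obtain ⟨P', hP'⟩ := hT.connected.exists_walk_length_eq_dist n' w
  have hQ : (P.cons hn).IsPath := Walk.isPath_of_length_eq_dist _ (by simp [hP, h])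
  have hQ' : (P'.cons hn').IsPath := Walk.isPath_of_length_eq_dist _ (by simp [hP', h'])
  have := (hT.isAcyclic.subsingleton_path p w).elim ⟨_, hQ⟩ ⟨_, hQ'⟩
  simpa using congrArg (fun Q : T.Path p w => Q.1.snd) this

theorem dist_eq_add_one_of_adj_of_ne {p n a b : V} (hn : T.Adj p n) (hab : T.Adj a b)
    (hb : b ≠ p) (ha : T.dist p a = T.dist n a + 1) : T.dist p b = T.dist n b + 1 := by
  have away : ∀ {n a b}, T.Adj p n → T.Adj a b → T.dist p b = T.dist p a + 1 →
      T.dist p a = T.dist n a + 1 → T.dist p b = T.dist n b + 1 := by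
    intro n a b hn hab hup ha
    have h₁ := hT.connected.dist_triangle (u := n) (v := a) (w := b)
    have h₂ := hT.connected.dist_triangle (u := p) (v := n) (w := b)
    rw [dist_eq_one_iff_adj.2 hab] at h₁
    rw [dist_eq_one_iff_adj.2 hn] at h₂
    omega
  rcases hT.dist_eq_dist_add_one_of_adj p hab with hdown | hup
  · obtain ⟨n', hn', hb'⟩ := hT.connected.exists_adj_dist_eq_add_one hb.symm
    obtain rfl := hT.eq_of_adj_of_dist_eq_add_one hn hn' ha (away hn' hab.symm hdown hb')
    exact hb'
  · exact away hn hab hup ha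

theorem dist_eq_add_one_of_walk {p n a b : V} (hn : T.Adj p n) (P : T.Walk a b)
    (hp : p ∉ P.support) (ha : T.dist p a = T.dist n a + 1) : T.dist p b = T.dist n b + 1 := by
  induction P with
  | nil => exact ha
  | cons hab P ih =>
    rw [Walk.support_cons, List.mem_cons, not_or] at hp
    exact ih hp.2 (hT.dist_eq_add_one_of_adj_of_ne hn hab
      (fun h => hp.2 (h ▸ P.start_mem_support)) ha)

theorem dist_add_dist_le_dist {p n n' a b : V} (hn : T.Adj p n) (hn' : T.Adj p n')
    (hne : n ≠ n') (ha : T.dist p a = T.dist n a + 1) (hb : T.dist p b = T.dist n' b + 1) :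
    T.dist a p + T.dist p b ≤ T.dist a b := by
  obtain ⟨P, hP⟩ := hT.connected.exists_walk_length_eq_dist a b
  by_cases hpP : p ∈ P.support
  · calc T.dist a p + T.dist p b
        ≤ (P.takeUntil p hpP).length + (P.dropUntil p hpP).length :=
          add_le_add (dist_le _) (dist_le _)
      _ = T.dist a b := by rw [← Walk.length_append, P.take_spec hpP, hP]
  · exact absurd (hT.eq_of_adj_of_dist_eq_add_one hn hn'
      (hT.dist_eq_add_one_of_walk hn P hpP ha) hb) hne

theorem exists_degree_eq_one_dist_eq_add_one [Fintype V] [DecidableRel T.Adj] {a b : V}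
    (hab : T.Adj a b) : ∃ u, T.degree u = 1 ∧ T.dist a u = T.dist b u + 1 := by
  obtain ⟨u, hu, hmax⟩ := Finset.exists_max_image {w | T.dist a w = T.dist b w + 1} (T.dist a)
    ⟨b, by simp [hab]⟩
  rw [Finset.mem_filter_univ] at hu
  refine ⟨u, ?_, hu⟩
  by_contra hdeg
  have hua : u ≠ a := by rintro rfl; simp at hu
  obtain ⟨w₀, hw₀, hd₀⟩ := hT.connected.exists_adj_dist_eq_add_one hua
  obtain ⟨w, hw, hww₀⟩ : ∃ w, T.Adj u w ∧ w ≠ w₀ := by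
    by_contra! h
    exact hdeg (degree_eq_one_iff_existsUnique_adj.2 ⟨w₀, hw₀, h⟩)
  have hfar : T.dist a w = T.dist a u + 1 := by
    refine (hT.dist_eq_dist_add_one_of_adj a hw).resolve_left fun h => hww₀ ?_
    refine hT.eq_of_adj_of_dist_eq_add_one hw hw₀ ?_ hd₀
    rw [dist_comm, h, dist_comm]
  have hwa : w ≠ a := by rintro rfl; simp at hfar
  have := hmax w (by simpa using hT.dist_eq_add_one_of_adj_of_ne hab hw hwa hu)
  omega

end IsTree

/-- Prune the pendant vertex `p` (joining its neighbours `q` and `c` directly) and regraft it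
above `r`. -/
def regraft (T : SimpleGraph W) (p q c r : W) : SimpleGraph W :=
  T.deleteEdges {s(p, q), s(p, c)} ⊔ edge q c ⊔ edge p r

theorem regraft_adj {T : SimpleGraph W} {p q c r x y : W} :
    (T.regraft p q c r).Adj x y ↔ (T.Adj x y ∧ s(x, y) ≠ s(p, q) ∧ s(x, y) ≠ s(p, c)) ∨
      (s(q, c) = s(x, y) ∧ x ≠ y) ∨ (s(p, r) = s(x, y) ∧ x ≠ y) := by
  simp [regraft, adj_edge, or_assoc, and_assoc]

theorem regraft_adj_of_adj {T : SimpleGraph W} {p q c r x y : W} (h : T.Adj x y) (hx : x ≠ p)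
    (hy : y ≠ p) : (T.regraft p q c r).Adj x y :=
  regraft_adj.2 (Or.inl ⟨h, by grind [Sym2.eq_iff], by grind [Sym2.eq_iff]⟩)

/-- Every edge of `T` is contracted or kept by this map into `T.regraft p q c r`, so regrafting
shortens no distance between vertices other than `p` and `l`. -/
noncomputable def collapseFork (p l c : W) (x : W) : W := if x = p ∨ x = l then c else x

theorem collapseFork_of_ne {p l c x : W} (hp : x ≠ p) (hl : x ≠ l) : collapseFork p l c x = x :=
  if_neg (by tauto)

/-- `l` is a leaf hanging from `p ≠ r`, whose other neighbours are `q`, towards `r`, and `c`. -/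
structure IsPendantFork (T : SimpleGraph W) (r l p q c : W) : Prop where
  adj_leaf : ∀ z, T.Adj l z ↔ z = p
  adj_fork : ∀ z, T.Adj p z ↔ z = l ∨ z = q ∨ z = c
  l_ne_q : l ≠ q
  l_ne_c : l ≠ c
  q_ne_c : q ≠ c
  p_ne_r : p ≠ r
  dist_root : T.dist p r = T.dist q r + 1

namespace IsPendantFork

variable {T : SimpleGraph W} {r l p q c : W} (F : T.IsPendantFork r l p q c)
include F

theorem adj_l : T.Adj p l := (F.adj_fork l).2 (Or.inl rfl)
theorem adj_q : T.Adj p q := (F.adj_fork q).2 (Or.inr (Or.inl rfl))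
theorem adj_c : T.Adj p c := (F.adj_fork c).2 (Or.inr (Or.inr rfl))

theorem collapseFork_adj (x y : W) (h : T.Adj x y) :
    collapseFork p l c x = collapseFork p l c y ∨
      (T.regraft p q c r).Adj (collapseFork p l c x) (collapseFork p l c y) := by
  have := F.adj_fork; have := F.adj_leaf; have := F.q_ne_c; have := T.adj_comm
  unfold collapseFork
  split_ifs <;> simp only [regraft_adj, Sym2.eq_iff] <;> grind

variable (hT : T.IsTree)
include hT

theorem l_ne_r : l ≠ r := by
  rintro rfl
  have := F.dist_root
  rw [dist_eq_one_iff_adj.2 F.adj_l, eq_comm, Nat.add_eq_right,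
    hT.connected.dist_eq_zero_iff] at this
  exact F.l_ne_q this.symm

theorem c_ne_r : c ≠ r := by
  rintro rfl
  have := F.dist_root
  rw [dist_eq_one_iff_adj.2 F.adj_c, eq_comm, Nat.add_eq_right,
    hT.connected.dist_eq_zero_iff] at this
  exact F.q_ne_c this

theorem not_adj_q_c : ¬T.Adj q c := fun h =>
  hT.isAcyclic.cliqueFree le_rfl {p, q, c} (is3Clique_triple_iff.2 ⟨F.adj_q, F.adj_c, h⟩)

theorem eq_leaf_of_dist_eq_add_one {a : W} (h : T.dist p a = T.dist l a + 1) : a = l := by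
  by_contra hal
  obtain ⟨n, hln, hn⟩ := hT.connected.exists_adj_dist_eq_add_one (Ne.symm hal)
  rw [(F.adj_leaf n).1 hln] at hn
  omega

theorem connected_regraft : (T.regraft p q c r).Connected := by
  have hpr : (T.regraft p q c r).Adj p r := regraft_adj.2 (by simp [F.p_ne_r])
  have hreach : ∀ x, (T.regraft p q c r).Reachable x r := by
    intro x
    by_cases hx : x = p ∨ x = l
    · rcases hx with hx | hx <;> subst x
      · exact hpr.reachable
      · have hpl : (T.regraft p q c r).Adj p l := regraft_adj.2
          (Or.inl ⟨F.adj_l, by simp [F.l_ne_q, F.adj_l.ne'], by simp [F.l_ne_c, F.adj_l.ne']⟩)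
        exact hpl.symm.reachable.trans hpr.reachable
    obtain ⟨P⟩ := hT.connected.preconnected x r
    obtain ⟨P', -⟩ := P.exists_walk_length_le_of_forall_adj F.collapseFork_adj
    rw [collapseFork_of_ne (by tauto) (by tauto),
      collapseFork_of_ne F.p_ne_r.symm (F.l_ne_r hT).symm] at P'
    exact ⟨P'⟩
  exact (connected_iff _).2 ⟨fun x y => (hreach x).trans (hreach y).symm, ⟨r⟩⟩

theorem dist_regraft_le {a b : W} (ha : a ≠ p) (ha' : a ≠ l) (hb : b ≠ p) (hb' : b ≠ l) :
    (T.regraft p q c r).dist a b ≤ T.dist a b := by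
  simpa only [collapseFork_of_ne ha ha', collapseFork_of_ne hb hb'] using
    hT.connected.dist_le_of_forall_adj F.collapseFork_adj a b

/-- The path from `c`'s side to `q`'s side loses its detour through `p`. -/
theorem dist_regraft_lt {a b : W} (ha : T.dist p a = T.dist c a + 1)
    (hb : T.dist p b = T.dist q b + 1) : (T.regraft p q c r).dist a b < T.dist a b := by
  have hT' := F.connected_regraft hT
  have away : ∀ {n x}, T.Adj p n → n ≠ l → T.dist p x = T.dist n x + 1 →
      x ≠ p ∧ x ≠ l := by
    intro n x hpn hnl hx
    refine ⟨by rintro rfl; simp at hx, ?_⟩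
    rintro rfl
    exact hnl (hT.eq_of_adj_of_dist_eq_add_one hpn F.adj_l hx (by simp [F.adj_l]))
  obtain ⟨hap, hal⟩ := away F.adj_c F.l_ne_c.symm ha
  obtain ⟨hbp, hbl⟩ := away F.adj_q F.l_ne_q.symm hb
  have hcq : (T.regraft p q c r).dist c q = 1 :=
    dist_eq_one_iff_adj.2 (regraft_adj.2 (by simp [F.q_ne_c.symm]))
  calc (T.regraft p q c r).dist a b
      ≤ (T.regraft p q c r).dist a c + (T.regraft p q c r).dist c q +
          (T.regraft p q c r).dist q b :=
        hT'.dist_triangle.trans (Nat.add_le_add_right hT'.dist_triangle _)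
    _ ≤ T.dist a c + 1 + T.dist q b := by
        have := F.dist_regraft_le hT hap hal F.adj_c.ne' F.l_ne_c.symm
        have := F.dist_regraft_le hT F.adj_q.ne' F.l_ne_q.symm hbp hbl
        omega
    _ < T.dist a p + T.dist p b := by rw [dist_comm (u := a), dist_comm (u := a)]; omega
    _ ≤ T.dist a b := hT.dist_add_dist_le_dist F.adj_c F.adj_q F.q_ne_c.symm ha hb

end IsPendantFork

end SimpleGraph

theorem IsRootedBinaryLayout.exists_isPendantFork {V W : Type*} [Fintype W] {T : SimpleGraph W}
    {r : W} {φ : V → W} (h : IsRootedBinaryLayout T r φ) {l : W} (hl : T.degree l = 1)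
    (hlr : ¬T.Adj l r) : ∃ p q c, T.IsPendantFork r l p q c := by
  obtain ⟨hT, hr, hdeg, -⟩ := h
  obtain ⟨p, hlp, hp⟩ := degree_eq_one_iff_existsUnique_adj.1 hl
  have adj_leaf : ∀ z, T.Adj l z ↔ z = p := fun z => ⟨hp z, fun e => e ▸ hlp⟩
  have hpr : p ≠ r := by rintro rfl; exact hlr hlp
  have hl_ne_r : l ≠ r := by rintro rfl; omega
  obtain ⟨q, hpq, hq⟩ := hT.connected.exists_adj_dist_eq_add_one hpr
  obtain ⟨n, hln, hn⟩ := hT.connected.exists_adj_dist_eq_add_one hl_ne_r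
  rw [(adj_leaf n).1 hln] at hn
  have hlq : l ≠ q := by rintro rfl; omega
  have hp3 : (T.neighborFinset p).card = 3 := by
    refine (hdeg p hpr).resolve_left fun h1 => hlq ?_
    obtain ⟨z, -, hz⟩ := degree_eq_one_iff_existsUnique_adj.1 h1
    exact (hz l hlp.symm).trans (hz q hpq).symm
  have hsub : ({l, q} : Finset W) ⊆ T.neighborFinset p := by
    simp [Finset.insert_subset_iff, hlp.symm, hpq]
  obtain ⟨c, hc⟩ : ∃ c, T.neighborFinset p \ {l, q} = {c} := by
    rw [← Finset.card_eq_one, Finset.card_sdiff_of_subset hsub, hp3, Finset.card_pair hlq]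
  have hmem : ∀ z, z ∈ T.neighborFinset p \ {l, q} ↔ z = c := by simp [hc]
  simp only [Finset.mem_sdiff, mem_neighborFinset, Finset.mem_insert,
    Finset.mem_singleton] at hmem
  obtain ⟨-, hcl, hcq⟩ : T.Adj p c ∧ c ≠ l ∧ c ≠ q := by simpa using (hmem c).2 rfl
  refine ⟨p, q, c, adj_leaf, fun z => ?_, hlq, hcl.symm, hcq.symm, hpr, hq⟩
  have := hmem z
  have := hlp.symm
  grind

theorem addIsolated_adj {V : Type*} {G : SimpleGraph V} {a b : Option V} :
    (addIsolated G).Adj a b ↔ ∃ x y, a = some x ∧ b = some y ∧ G.Adj x y := by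
  simp only [addIsolated, fromRel_adj]
  constructor
  · rintro ⟨-, h | ⟨x, y, rfl, rfl, hxy⟩⟩
    · exact h
    · exact ⟨y, x, rfl, rfl, hxy.symm⟩
  · rintro ⟨x, y, rfl, rfl, hxy⟩
    exact ⟨fun h => hxy.ne (Option.some_injective V h), Or.inl ⟨x, y, rfl, rfl, hxy⟩⟩

theorem treeLength_lt_treeLength {V W : Type*} [Fintype V] [Fintype W] {H : SimpleGraph V}
    {T T' : SimpleGraph W} {φ : V → W}
    (hle : ∀ x y, H.Adj x y → T'.dist (φ x) (φ y) ≤ T.dist (φ x) (φ y)) {x y : V}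
    (hxy : H.Adj x y) (hlt : T'.dist (φ x) (φ y) < T.dist (φ x) (φ y)) :
    treeLength H T' φ < treeLength H T φ :=
  Finset.sum_lt_sum (fun e he => by induction e using Sym2.ind; exact hle _ _ (by simpa using he))
    ⟨s(x, y), by simpa using hxy, hlt⟩

namespace SimpleGraph.IsPendantFork

section

variable {W : Type*} [Fintype W] {T : SimpleGraph W} {r l p q c : W}
  (F : T.IsPendantFork r l p q c)
include F

theorem degree_fork : T.degree p = 3 := by
  rw [← card_neighborFinset_eq_degree, Finset.card_eq_three]
  exact ⟨l, q, c, F.l_ne_q, F.l_ne_c, F.q_ne_c, by ext; simp [F.adj_fork]⟩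

variable (hT : T.IsTree)
include hT

theorem degree_regraft_add (w : W) :
    (T.regraft p q c r).degree w + (if w = p then 1 else 0) =
      T.degree w + (if w = r then 1 else 0) := by
  have := F.adj_fork; have := F.adj_leaf; have := F.l_ne_q; have := F.l_ne_c; have := F.q_ne_c
  have := F.p_ne_r; have := F.l_ne_r hT; have := F.c_ne_r hT; have := F.not_adj_q_c hT
  have := T.adj_comm; have := T.loopless
  simp only [← card_neighborFinset_eq_degree]
  by_cases hwp : w = p
  · have hN : (T.regraft p q c r).neighborFinset p = {l, r} := by
      ext z; simp only [mem_neighborFinset, regraft_adj, Sym2.eq_iff, Finset.mem_insert,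
        Finset.mem_singleton]; grind
    rw [if_pos hwp, if_neg (hwp ▸ F.p_ne_r), hwp, hN, Finset.card_pair (F.l_ne_r hT),
      card_neighborFinset_eq_degree, F.degree_fork]
  rw [if_neg hwp]
  by_cases hwr : w = r
  · rw [if_pos hwr, hwr]
    obtain ⟨x, hN, hx⟩ : ∃ x, (T.regraft p q c r).neighborFinset r =
        insert x (T.neighborFinset r) ∧ ¬T.Adj r x := by
      by_cases hqr : q = r
      · refine ⟨c, ?_, by grind⟩
        ext z; simp only [mem_neighborFinset, regraft_adj, Sym2.eq_iff, Finset.mem_insert]; grind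
      · refine ⟨p, ?_, by grind⟩
        ext z; simp only [mem_neighborFinset, regraft_adj, Sym2.eq_iff, Finset.mem_insert]; grind
    rw [hN, Finset.card_insert_of_notMem (by simpa using hx)]
  rw [if_neg hwr, add_zero, add_zero]
  by_cases hwqc : w = q ∨ w = c
  · obtain ⟨x, hN, hx⟩ : ∃ x, (T.regraft p q c r).neighborFinset w =
        insert x ((T.neighborFinset w).erase p) ∧ ¬T.Adj w x := by
      rcases hwqc with hwq | hwc
      · refine ⟨c, ?_, by grind⟩
        ext z; simp only [mem_neighborFinset, regraft_adj, Sym2.eq_iff, Finset.mem_insert,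
          Finset.mem_erase]; grind
      · refine ⟨q, ?_, by grind⟩
        ext z; simp only [mem_neighborFinset, regraft_adj, Sym2.eq_iff, Finset.mem_insert,
          Finset.mem_erase]; grind
    rw [hN, Finset.card_insert_of_notMem (by simp [hx]),
      Finset.card_erase_add_one (by simp only [mem_neighborFinset]; grind)]
  · congr 1
    ext z; simp only [mem_neighborFinset, regraft_adj, Sym2.eq_iff]; grind

theorem isTree_regraft : (T.regraft p q c r).IsTree := by
  have hsum := Finset.sum_congr rfl fun w (_ : w ∈ Finset.univ) => F.degree_regraft_add hT w
  simp only [Finset.sum_add_distrib, Finset.sum_ite_eq', Finset.mem_univ, if_true,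
    sum_degrees_eq_twice_card_edges] at hsum
  have hconn := F.connected_regraft hT
  rw [isTree_iff_connected_and_card] at hT ⊢
  refine ⟨hconn, ?_⟩
  simp only [Nat.card_eq_fintype_card, ← edgeFinset_card] at hT ⊢
  omega

end

variable {V W : Type*} [Fintype W] {G : SimpleGraph V} {T : SimpleGraph W} {r l p q c : W}

theorem isRootedBinaryLayout_regraft {φ : V → W} (h : IsRootedBinaryLayout T r φ)
    (F : T.IsPendantFork r l p q c) : IsRootedBinaryLayout (T.regraft p q c r) p φ := by
  obtain ⟨hT, hr, hdeg, hbij⟩ := h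
  have hd := F.degree_regraft_add hT
  have hp := F.degree_fork
  have hpr := F.p_ne_r
  refine ⟨F.isTree_regraft hT, by simpa [hpr, hp] using hd p, fun w hwp => ?_, ?_⟩
  · by_cases hwr : w = r
    · subst hwr; exact Or.inr (by simpa [hwp, hr] using hd w)
    · have := hd w
      simp only [hwp, hwr, if_false, add_zero] at this
      rw [this]; exact hdeg w hwr
  · convert hbij using 1
    ext w
    have := hd w
    by_cases hwp : w = p
    · subst hwp; simp_all
    by_cases hwr : w = r
    · subst hwr; simp_all
    simp_all

theorem apply_ne_fork {φ : V → W} (h : IsRootedBinaryLayout T r φ)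
    (F : T.IsPendantFork r l p q c) (x : V) : φ x ≠ p := fun e => by
  have := h.2.2.2.mapsTo (Set.mem_univ x)
  simp [e, F.degree_fork] at this

/-- The two sides of `p` both carry labels, so some edge of the connected graph `G` crosses. -/
theorem exists_adj_across {φ : Option V → W} (hG : G.Connected) (h : IsRootedBinaryLayout T r φ)
    (F : T.IsPendantFork r (φ none) p q c) :
    ∃ u v, G.Adj u v ∧ T.dist p (φ (some u)) = T.dist c (φ (some u)) + 1 ∧
      T.dist p (φ (some v)) = T.dist q (φ (some v)) + 1 := by
  have hT := h.1
  have hbij := h.2.2.2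
  have label : ∀ {n}, T.Adj p n → n ≠ φ none →
      ∃ x, T.dist p (φ (some x)) = T.dist n (φ (some x)) + 1 := by
    intro n hpn hn
    obtain ⟨w, hw, hwn⟩ := hT.exists_degree_eq_one_dist_eq_add_one hpn
    obtain ⟨_ | x, -, rfl⟩ := hbij.surjOn hw
    · exact absurd (hT.eq_of_adj_of_dist_eq_add_one hpn F.adj_l hwn (by simp [F.adj_l])) hn
    · exact ⟨x, hwn⟩
  obtain ⟨x, hx⟩ := label F.adj_c F.l_ne_c.symm
  obtain ⟨y, hy⟩ := label F.adj_q F.l_ne_q.symm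
  obtain ⟨P⟩ := hG.preconnected x y
  obtain ⟨d, -, hu, hv⟩ := P.exists_boundary_dart
    {u | T.dist p (φ (some u)) = T.dist c (φ (some u)) + 1} hx
    fun h => F.q_ne_c (hT.eq_of_adj_of_dist_eq_add_one F.adj_q F.adj_c hy h)
  refine ⟨d.fst, d.snd, d.adj, hu, ?_⟩
  obtain ⟨n, hpn, hn⟩ :=
    hT.connected.exists_adj_dist_eq_add_one (F.apply_ne_fork h (some d.snd)).symm
  rcases (F.adj_fork n).1 hpn with rfl | rfl | rfl
  · cases hbij.injOn (Set.mem_univ _) (Set.mem_univ _) (F.eq_leaf_of_dist_eq_add_one hT hn)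
  · exact hn
  · exact absurd hn hv

theorem treeLength_regraft_lt [Fintype V] {φ : Option V → W} (hG : G.Connected)
    (h : IsRootedBinaryLayout T r φ)
    (F : T.IsPendantFork r (φ none) p q c) :
    treeLength (addIsolated G) (T.regraft p q c r) φ < treeLength (addIsolated G) T φ := by
  have hl : ∀ x, φ (some x) ≠ φ none := fun x e =>
    Option.some_ne_none x (h.2.2.2.injOn (Set.mem_univ _) (Set.mem_univ _) e)
  obtain ⟨u, v, huv, hu, hv⟩ := F.exists_adj_across hG h
  refine treeLength_lt_treeLength (fun a b hab => ?_) (addIsolated_adj.2 ⟨u, v, rfl, rfl, huv⟩)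
    (F.dist_regraft_lt h.1 hu hv)
  obtain ⟨x, y, rfl, rfl, -⟩ := addIsolated_adj.1 hab
  exact F.dist_regraft_le h.1 (F.apply_ne_fork h _) (hl x) (F.apply_ne_fork h _) (hl y)

end SimpleGraph.IsPendantFork

theorem isolated_leaf_adj_root_general {V : Type*} [Fintype V]
    (G : SimpleGraph V) (hG : G.Connected)
    (T : SimpleGraph (Fin (2 * Fintype.card (Option V) - 1)))
    (r : Fin (2 * Fintype.card (Option V) - 1))
    (φ : Option V → Fin (2 * Fintype.card (Option V) - 1))
    (hlayout : IsRootedBinaryLayout T r φ)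
    (hmin : ∀ (T' : SimpleGraph (Fin (2 * Fintype.card (Option V) - 1)))
      (r' : Fin (2 * Fintype.card (Option V) - 1))
      (φ' : Option V → Fin (2 * Fintype.card (Option V) - 1)),
      IsRootedBinaryLayout T' r' φ' →
      treeLength (addIsolated G) T φ ≤ treeLength (addIsolated G) T' φ') :
    T.Adj (φ none) r := by
  by_contra hadj
  obtain ⟨p, q, c, F⟩ :=
    hlayout.exists_isPendantFork (hlayout.2.2.2.mapsTo (Set.mem_univ none)) hadj
  exact (hmin _ p φ (F.isRootedBinaryLayout_regraft hlayout)).not_gt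
    (F.treeLength_regraft_lt hG hlayout)

/-- In any minimum-tree-length rooted binary tree layout of `G ⊎ {v}` (with `v` an
isolated vertex), the leaf corresponding to `v` is a child of the root. -/
theorem isolated_leaf_adj_root {V : Type*} [Fintype V]
    (G : SimpleGraph V) (hG : G.Connected) (hE : G.edgeSet.Nonempty)
    (T : SimpleGraph (Fin (2 * Fintype.card (Option V) - 1)))
    (r : Fin (2 * Fintype.card (Option V) - 1))
    (φ : Option V → Fin (2 * Fintype.card (Option V) - 1))
    (hlayout : IsRootedBinaryLayout T r φ)
    (hmin : ∀ (T' : SimpleGraph (Fin (2 * Fintype.card (Option V) - 1)))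
      (r' : Fin (2 * Fintype.card (Option V) - 1))
      (φ' : Option V → Fin (2 * Fintype.card (Option V) - 1)),
      IsRootedBinaryLayout T' r' φ' →
      treeLength (addIsolated G) T φ ≤ treeLength (addIsolated G) T' φ') :
    T.Adj (φ none) r :=
  isolated_leaf_adj_root_general G hG T r φ hlayout hmin
end

section
/- Let G be a multigraph on n vertices consisting of a simple graph G₀ with m edges plus, between every pair of distinct vertices, M = m·(2n−2) additional parallel edges. Then for any two tree layouts (T₁, φ₁), (T₂, φ₂) of G with internal degrees 3: if σ_LL(T₁) < σ_LL(T₂), then L(T₁, φ₁, G) < L(T₂, φ₂, G). In particular, any minimum-tree-length layout of G must use a tree T minimizing σ_LL among all such trees with n leaves. -/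
open SimpleGraph
open scoped Classical

/-- Sum of pairwise distances between leaves (vertices of degree 1), as a double sum over
ordered pairs (twice `σ_LL`). -/
noncomputable def leafDistSum {W : Type*} [Fintype W] (T : SimpleGraph W) : ℕ :=
  ∑ x ∈ Finset.univ.filter (fun w => T.degree w = 1),
    ∑ y ∈ Finset.univ.filter (fun w => T.degree w = 1), T.dist x y

/-- `(T, φ)` is a tree layout: `T` is a tree with all internal degrees 3 and `φ` is a
bijection onto the leaves of `T`. -/
def IsTreeLayout {V W : Type*} [Fintype W] (T : SimpleGraph W) (φ : V → W) : Prop :=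
  T.IsTree ∧ (∀ w : W, T.degree w = 1 ∨ T.degree w = 3) ∧
    Set.BijOn φ Set.univ {w : W | T.degree w = 1}


lemma cardW_of_layout {V W : Type*} [Fintype V] [Fintype W]
    (T : SimpleGraph W) (φ : V → W) (h : IsTreeLayout T φ) (n : ℕ)
    (hn : 3 ≤ n) (hnV : Fintype.card V = n) : Fintype.card W = 2 * n - 2 := by
  classical
  set s : Finset W := Finset.univ.filter (fun w => T.degree w = 1) with hs
  have hcard_s : s.card = n := by
    have e := h.2.2.equiv φ
    have h1 : Fintype.card (Set.univ : Set V) = Fintype.card {w : W | T.degree w = 1} :=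
      Fintype.card_congr e
    have h2 : Fintype.card {w : W | T.degree w = 1} = s.card := by
      rw [hs]
      exact (Fintype.card_subtype _)
    rw [h2] at h1
    have h3 : Fintype.card (Set.univ : Set V) = Fintype.card V :=
      Fintype.card_congr (Equiv.Set.univ V)
    omega
  have hsum : ∑ w : W, T.degree w = 2 * T.edgeFinset.card :=
    T.sum_degrees_eq_twice_card_edges
  have hedges : T.edgeFinset.card + 1 = Fintype.card W := h.1.card_edgeFinset
  have hsplit : ∑ w : W, T.degree w
      = (∑ w ∈ s, T.degree w) + ∑ w ∈ Finset.univ.filter (fun w => ¬ T.degree w = 1), T.degree w := by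
    rw [hs, Finset.sum_filter_add_sum_filter_not]
  have hA : ∑ w ∈ s, T.degree w = n := by
    have : ∀ w ∈ s, T.degree w = 1 := fun w hw => by
      rw [hs] at hw
      exact (Finset.mem_filter.1 hw).2
    rw [Finset.sum_congr rfl this, Finset.sum_const, smul_eq_mul, mul_one, hcard_s]
  have hB : ∑ w ∈ Finset.univ.filter (fun w => ¬ T.degree w = 1), T.degree w
      = 3 * (Fintype.card W - n) := by
    rw [Finset.sum_congr rfl (fun w hw => by
      have hw' := (Finset.mem_filter.1 hw).2
      rcases h.2.1 w with h1 | h3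
      · exact absurd h1 hw'
      · exact h3)]
    have hcc : (Finset.univ.filter (fun w => ¬ T.degree w = 1)).card = Fintype.card W - n := by
      have := Finset.card_filter_add_card_filter_not
        (s := (Finset.univ : Finset W)) (p := fun w => T.degree w = 1)
      rw [← hs] at this
      simp only [Finset.card_univ] at this
      omega
    rw [Finset.sum_const, hcc, smul_eq_mul, mul_comm]
  have hle : n ≤ Fintype.card W := by
    calc n = s.card := hcard_s.symm
      _ ≤ Fintype.card W := by simpa using Finset.card_le_univ s
  have hpos : 1 ≤ Fintype.card W := le_trans (by omega) hle
  omega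

lemma even_double_sum {W : Type*} [Fintype W] (s : Finset W) (d : W → W → ℕ)
    (hsymm : ∀ x y, d x y = d y x) (hdiag : ∀ x, d x x = 0) :
    Even (∑ x ∈ s, ∑ y ∈ s, d x y) := by
  classical
  letI : LinearOrder W := LinearOrder.lift' (Fintype.equivFin W) (Equiv.injective _)
  rw [← Finset.sum_product']
  rw [← Finset.sum_filter_add_sum_filter_not (s ×ˢ s) (fun p => p.1 < p.2)]
  rw [← Finset.sum_filter_add_sum_filter_not ((s ×ˢ s).filter (fun p => ¬ p.1 < p.2))
    (fun p => p.2 < p.1)]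
  rw [Finset.filter_filter, Finset.filter_filter]
  have h3 : ∑ p ∈ (s ×ˢ s).filter (fun p => ¬ p.1 < p.2 ∧ ¬ p.2 < p.1), d p.1 p.2 = 0 := by
    apply Finset.sum_eq_zero
    intro p hp
    have hp' := (Finset.mem_filter.1 hp).2
    have : p.1 = p.2 := le_antisymm (not_lt.1 hp'.2) (not_lt.1 hp'.1)
    rw [this, hdiag]
  have h2 : ∑ p ∈ (s ×ˢ s).filter (fun p => ¬ p.1 < p.2 ∧ p.2 < p.1), d p.1 p.2
      = ∑ p ∈ (s ×ˢ s).filter (fun p => p.1 < p.2), d p.1 p.2 := by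
    apply Finset.sum_nbij' (fun p => Prod.swap p) (fun p => Prod.swap p)
    · intro a ha
      simp only [Finset.mem_filter, Finset.mem_product] at ha ⊢
      exact ⟨⟨ha.1.2, ha.1.1⟩, ha.2.2⟩
    · intro a ha
      simp only [Finset.mem_filter, Finset.mem_product] at ha ⊢
      exact ⟨⟨ha.1.2, ha.1.1⟩, lt_asymm ha.2, ha.2⟩
    · intro a _; simp
    · intro a _; simp
    · intro a _; exact hsymm _ _
  simp only [h2, h3, add_zero]
  exact Even.add_self _

lemma treeLength_lt {V W : Type*} [Fintype V] [Fintype W]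
    (G₀ : SimpleGraph V) (n m : ℕ)
    (hn : 3 ≤ n) (hnV : Fintype.card V = n)
    (hm : 1 ≤ m) (hmE : G₀.edgeFinset.card = m)
    (T : SimpleGraph W) (φ : V → W) (h : IsTreeLayout T φ) :
    treeLength G₀ T φ < m * (2 * n - 2) := by
  classical
  have hcW : Fintype.card W = 2 * n - 2 := cardW_of_layout T φ h n hn hnV
  have hbound : ∀ e ∈ G₀.edgeFinset,
      Sym2.lift ⟨fun u v => T.dist (φ u) (φ v), fun _ _ => T.dist_comm⟩ e ≤ 2 * n - 3 := by
    intro e he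
    induction e using Sym2.ind with
    | _ u v =>
      simp only [Sym2.lift_mk]
      have hdist : T.dist (φ u) (φ v) < Fintype.card W := by
        obtain ⟨w⟩ := h.1.isConnected (φ u) (φ v)
        calc T.dist (φ u) (φ v) ≤ w.toPath.1.length := SimpleGraph.dist_le _
          _ < Fintype.card W := w.toPath.2.length_lt
      omega
  have := Finset.sum_le_card_nsmul G₀.edgeFinset _ (2 * n - 3) hbound
  rw [hmE, smul_eq_mul] at this
  calc treeLength G₀ T φ ≤ m * (2 * n - 3) := this
    _ < m * (2 * n - 2) := by
        exact Nat.mul_lt_mul_of_le_of_lt (le_refl m) (by omega) (by omega)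

lemma even_leafDistSum {W : Type*} [Fintype W] (T : SimpleGraph W) :
    Even (leafDistSum T) :=
  even_double_sum _ _ (fun _ _ => T.dist_comm) (fun _ => T.dist_self)

lemma aux_strict {V W₁ W₂ : Type*}
    [Fintype V] [Fintype W₁] [Fintype W₂]
    (G₀ : SimpleGraph V) (n m M : ℕ)
    (hn : 3 ≤ n) (hnV : Fintype.card V = n)
    (hm : 1 ≤ m) (hmE : G₀.edgeFinset.card = m) (hM : M = m * (2 * n - 2))
    (T₁ : SimpleGraph W₁) (φ₁ : V → W₁) (h₁ : IsTreeLayout T₁ φ₁)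
    (T₂ : SimpleGraph W₂) (φ₂ : V → W₂) (h₂ : IsTreeLayout T₂ φ₂)
    (hσ : leafDistSum T₁ < leafDistSum T₂) :
    2 * treeLength G₀ T₁ φ₁ + M * leafDistSum T₁ <
      2 * treeLength G₀ T₂ φ₂ + M * leafDistSum T₂ := by
  have he₁ := (even_leafDistSum T₁)
  have he₂ := (even_leafDistSum T₂)
  rw [Nat.even_iff] at he₁ he₂
  have hσ2 : leafDistSum T₁ + 2 ≤ leafDistSum T₂ := by omega
  have ht₁ : treeLength G₀ T₁ φ₁ < M := by
    rw [hM]; exact treeLength_lt G₀ n m hn hnV hm hmE T₁ φ₁ h₁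
  calc 2 * treeLength G₀ T₁ φ₁ + M * leafDistSum T₁
      < 2 * M + M * leafDistSum T₁ := by
        exact Nat.add_lt_add_right (by omega) _
    _ = M * (leafDistSum T₁ + 2) := by ring
    _ ≤ M * leafDistSum T₂ := Nat.mul_le_mul_left M hσ2
    _ ≤ 2 * treeLength G₀ T₂ φ₂ + M * leafDistSum T₂ := Nat.le_add_left _ _

/-- For the multigraph `G = G₀ + M` parallel edges between every pair of vertices (with
`M = m(2n−2)`), the tree length of a layout is `L(T,φ,G₀) + M·σ_LL(T)`; here everything
is doubled: `2L(T,φ,G) = 2L(T,φ,G₀) + M·leafDistSum T`. A layout on a tree with strictly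
smaller `σ_LL` always has strictly smaller tree length; hence any minimum-tree-length
layout of `G` must use a tree minimizing `σ_LL`. -/
theorem multigraph_layout_dominated_by_sigmaLL {V W₁ W₂ : Type*}
    [Fintype V] [Fintype W₁] [Fintype W₂]
    (G₀ : SimpleGraph V) (n m M : ℕ)
    (hn : 3 ≤ n) (hnV : Fintype.card V = n)
    (hm : 1 ≤ m) (hmE : G₀.edgeFinset.card = m) (hM : M = m * (2 * n - 2))
    (T₁ : SimpleGraph W₁) (φ₁ : V → W₁) (h₁ : IsTreeLayout T₁ φ₁)
    (T₂ : SimpleGraph W₂) (φ₂ : V → W₂) (h₂ : IsTreeLayout T₂ φ₂) :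
    (leafDistSum T₁ < leafDistSum T₂ →
      2 * treeLength G₀ T₁ φ₁ + M * leafDistSum T₁ <
        2 * treeLength G₀ T₂ φ₂ + M * leafDistSum T₂) ∧
    (2 * treeLength G₀ T₁ φ₁ + M * leafDistSum T₁ ≤
        2 * treeLength G₀ T₂ φ₂ + M * leafDistSum T₂ →
      leafDistSum T₁ ≤ leafDistSum T₂) := by
  constructor
  · exact aux_strict G₀ n m M hn hnV hm hmE hM T₁ φ₁ h₁ T₂ φ₂ h₂
  · intro hle
    by_contra hlt
    exact absurd hle (not_le.2
      (aux_strict G₀ n m M hn hnV hm hmE hM T₂ φ₂ h₂ T₁ φ₁ h₁ (not_le.1 hlt)))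
end
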